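/- Existence of closest targets: let (X₀, Y₀) ∈ T have all input components x_{i0} and all output components y_{r0} strictly positive. Then the weighted L¹-distance function (X̂, Ŷ) ↦ Σ_{i=1}^m (x_{i0} − x̂_i)/x_{i0} + Σ_{r=1}^s (ŷ_r − y_{r0})/y_{r0} attains its minimum over the set of points of T that are Pareto-efficient in T and dominate (X₀, Y₀), and this set is nonempty. -/

import Mathlib

open Finset

/-- The variable-returns-to-scale (VRS) production possibility set generated by
DMUs with input vectors `X j` and output vectors `Y j`. -/
def VRS {m s n : ℕ} (X : Fin n → Fin m → ℝ) (Y : Fin n → Fin s → ℝ) :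
    Set ((Fin m → ℝ) × (Fin s → ℝ)) :=
  {p | (∀ r, 0 ≤ p.2 r) ∧ ∃ lam : Fin n → ℝ, (∀ j, 0 ≤ lam j) ∧ ∑ j, lam j = 1 ∧
    (∀ i, ∑ j, lam j * X j i ≤ p.1 i) ∧ (∀ r, p.2 r ≤ ∑ j, lam j * Y j r)}

/-- `q` dominates `p`: smaller (or equal) inputs and larger (or equal) outputs. -/
def Dominates {m s : ℕ} (q p : (Fin m → ℝ) × (Fin s → ℝ)) : Prop :=
  (∀ i, q.1 i ≤ p.1 i) ∧ (∀ r, p.2 r ≤ q.2 r)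

/-- `p` is Pareto-efficient in `T`. -/
def ParetoEff {m s : ℕ} (T : Set ((Fin m → ℝ) × (Fin s → ℝ)))
    (p : (Fin m → ℝ) × (Fin s → ℝ)) : Prop :=
  p ∈ T ∧ ¬ ∃ q ∈ T, Dominates q p ∧ q ≠ p

namespace VRSAux

variable {m s n : ℕ}

/-- The "simplex point" of `T` associated to weights `lam`. -/
def Pmap (X : Fin n → Fin m → ℝ) (Y : Fin n → Fin s → ℝ) (lam : Fin n → ℝ) :
    (Fin m → ℝ) × (Fin s → ℝ) :=
  (fun i => ∑ j, lam j * X j i, fun r => ∑ j, lam j * Y j r)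

lemma dom_trans {a b c : (Fin m → ℝ) × (Fin s → ℝ)} (h1 : Dominates a b)
    (h2 : Dominates b c) : Dominates a c :=
  ⟨fun i => le_trans (h1.1 i) (h2.1 i), fun r => le_trans (h2.2 r) (h1.2 r)⟩

lemma dom_antisymm {a b : (Fin m → ℝ) × (Fin s → ℝ)} (h1 : Dominates a b)
    (h2 : Dominates b a) : a = b := by
  have e1 : a.1 = b.1 := funext fun i => le_antisymm (h1.1 i) (h2.1 i)
  have e2 : a.2 = b.2 := funext fun r => le_antisymm (h2.2 r) (h1.2 r)
  exact Prod.ext e1 e2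

lemma dom_ne_strict {a b : (Fin m → ℝ) × (Fin s → ℝ)} (h : Dominates a b) (hne : a ≠ b) :
    (∃ i, a.1 i < b.1 i) ∨ (∃ r, b.2 r < a.2 r) := by
  by_contra hc
  push_neg at hc
  exact hne (dom_antisymm h ⟨hc.1, hc.2⟩)

lemma Pmem (X : Fin n → Fin m → ℝ) (Y : Fin n → Fin s → ℝ) (hY : ∀ j r, 0 ≤ Y j r)
    {lam : Fin n → ℝ} (hl : lam ∈ stdSimplex ℝ (Fin n)) : Pmap X Y lam ∈ VRS X Y := by
  refine ⟨fun r => ?_, lam, hl.1, hl.2, fun _ => le_refl _, fun _ => le_refl _⟩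
  show (0:ℝ) ≤ ∑ j, lam j * Y j r
  exact Finset.sum_nonneg fun j _ => mul_nonneg (hl.1 j) (hY j r)

lemma exists_simplex_dom (X : Fin n → Fin m → ℝ) (Y : Fin n → Fin s → ℝ)
    {p : (Fin m → ℝ) × (Fin s → ℝ)} (hp : p ∈ VRS X Y) :
    ∃ lam ∈ stdSimplex ℝ (Fin n), Dominates (Pmap X Y lam) p := by
  obtain ⟨hy, lam, h0, h1, hXc, hYc⟩ := hp
  exact ⟨lam, ⟨h0, h1⟩, hXc, hYc⟩

section Gmono
variable (x0 : Fin m → ℝ) (y0 : Fin s → ℝ)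

/-- The weighted L¹ distance function. -/
noncomputable def G (q : (Fin m → ℝ) × (Fin s → ℝ)) : ℝ :=
  (∑ i, (x0 i - q.1 i) / x0 i) + (∑ r, (q.2 r - y0 r) / y0 r)

lemma G_mono (hx : ∀ i, 0 < x0 i) (hy : ∀ r, 0 < y0 r)
    {a b : (Fin m → ℝ) × (Fin s → ℝ)} (h : Dominates a b) : G x0 y0 b ≤ G x0 y0 a := by
  refine add_le_add (Finset.sum_le_sum fun i _ => ?_) (Finset.sum_le_sum fun r _ => ?_)
  · exact (div_le_div_iff_of_pos_right (hx i)).2 (by linarith [h.1 i])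
  · exact (div_le_div_iff_of_pos_right (hy r)).2 (by linarith [h.2 r])

lemma G_strict (hx : ∀ i, 0 < x0 i) (hy : ∀ r, 0 < y0 r)
    {a b : (Fin m → ℝ) × (Fin s → ℝ)} (h : Dominates a b) (hne : a ≠ b) :
    G x0 y0 b < G x0 y0 a := by
  rcases dom_ne_strict h hne with ⟨i0, hi0⟩ | ⟨r0, hr0⟩
  · refine add_lt_add_of_lt_of_le (Finset.sum_lt_sum (fun i _ => ?_) ⟨i0, Finset.mem_univ _, ?_⟩)
      (Finset.sum_le_sum fun r _ => ?_)
    · exact (div_le_div_iff_of_pos_right (hx i)).2 (by linarith [h.1 i])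
    · exact (div_lt_div_iff_of_pos_right (hx i0)).2 (by linarith)
    · exact (div_le_div_iff_of_pos_right (hy r)).2 (by linarith [h.2 r])
  · refine add_lt_add_of_le_of_lt (Finset.sum_le_sum fun i _ => ?_)
      (Finset.sum_lt_sum (fun r _ => ?_) ⟨r0, Finset.mem_univ _, ?_⟩)
    · exact (div_le_div_iff_of_pos_right (hx i)).2 (by linarith [h.1 i])
    · exact (div_le_div_iff_of_pos_right (hy r)).2 (by linarith [h.2 r])
    · exact (div_lt_div_iff_of_pos_right (hy r0)).2 (by linarith)

end Gmono

/-- Key support lemma: if `P lam` is efficient and `supp mu ⊆ supp lam`, then `P mu` is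
efficient. -/
lemma support_eff (X : Fin n → Fin m → ℝ) (Y : Fin n → Fin s → ℝ) (hY : ∀ j r, 0 ≤ Y j r)
    {lam mu : Fin n → ℝ} (hl : lam ∈ stdSimplex ℝ (Fin n)) (hm : mu ∈ stdSimplex ℝ (Fin n))
    (hsupp : ∀ j, 0 < mu j → 0 < lam j)
    (heff : ParetoEff (VRS X Y) (Pmap X Y lam)) :
    ParetoEff (VRS X Y) (Pmap X Y mu) := by
  refine ⟨Pmem X Y hY hm, ?_⟩
  rintro ⟨q, hqT, hqdom, hqne⟩
  obtain ⟨nu, hnu, hnudom⟩ := exists_simplex_dom X Y hqT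
  have hdom : Dominates (Pmap X Y nu) (Pmap X Y mu) := dom_trans hnudom hqdom
  have hne : Pmap X Y nu ≠ Pmap X Y mu := fun he =>
    hqne (dom_antisymm hqdom (he ▸ hnudom))
  -- choose ε
  have hFne : (Finset.univ.filter fun j => 0 < mu j).Nonempty := by
    by_contra hc
    rw [Finset.not_nonempty_iff_eq_empty] at hc
    have hall : ∀ j, mu j = 0 := by
      intro j
      by_contra hj
      have hjpos : 0 < mu j := lt_of_le_of_ne (hm.1 j) (Ne.symm hj)
      have : j ∈ Finset.univ.filter fun j => 0 < mu j :=
        Finset.mem_filter.2 ⟨Finset.mem_univ _, hjpos⟩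
      simp [hc] at this
    have h1 := hm.2
    rw [Finset.sum_eq_zero (fun j _ => hall j)] at h1
    norm_num at h1
  set F := Finset.univ.filter fun j => 0 < mu j with hF
  set ε := F.inf' hFne lam with hεdef
  have hε : 0 < ε := by
    rw [hεdef, Finset.lt_inf'_iff]
    intro j hj
    exact hsupp j (Finset.mem_filter.1 hj).2
  have hεle : ∀ j, 0 < mu j → ε ≤ lam j := by
    intro j hj
    have hjF : j ∈ F := by
      rw [hF, Finset.mem_filter]
      exact ⟨Finset.mem_univ _, hj⟩
    exact Finset.inf'_le lam hjF
  set lam' := fun j => lam j + ε * (nu j - mu j) with hlam'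
  have hl' : lam' ∈ stdSimplex ℝ (Fin n) := by
    constructor
    · intro j
      by_cases hj : 0 < mu j
      · have h1 : ε ≤ lam j := hεle j hj
        have h2 : mu j ≤ 1 := by
          have := Finset.single_le_sum (fun i _ => hm.1 i) (Finset.mem_univ j)
          rw [hm.2] at this; exact this
        have h3 : 0 ≤ nu j := hnu.1 j
        have h4 : ε * mu j ≤ ε * 1 := by
          exact mul_le_mul_of_nonneg_left h2 hε.le
        have h5 : 0 ≤ ε * nu j := mul_nonneg hε.le h3
        simp only [hlam']
        nlinarith
      · have hj0 : mu j = 0 := le_antisymm (not_lt.1 hj) (hm.1 j)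
        have h5 : 0 ≤ ε * nu j := mul_nonneg hε.le (hnu.1 j)
        simp only [hlam', hj0]
        have := hl.1 j
        linarith
    · simp only [hlam']
      rw [Finset.sum_add_distrib, ← Finset.mul_sum, Finset.sum_sub_distrib,
        hnu.2, hm.2, hl.2]
      ring
  have key1 : ∀ i, (Pmap X Y lam').1 i
      = (Pmap X Y lam).1 i + ε * ((Pmap X Y nu).1 i - (Pmap X Y mu).1 i) := by
    intro i
    simp only [Pmap, hlam']
    rw [← Finset.sum_sub_distrib, Finset.mul_sum, ← Finset.sum_add_distrib]
    congr 1; funext j; ring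
  have key2 : ∀ r, (Pmap X Y lam').2 r
      = (Pmap X Y lam).2 r + ε * ((Pmap X Y nu).2 r - (Pmap X Y mu).2 r) := by
    intro r
    simp only [Pmap, hlam']
    rw [← Finset.sum_sub_distrib, Finset.mul_sum, ← Finset.sum_add_distrib]
    congr 1; funext j; ring
  have hdom' : Dominates (Pmap X Y lam') (Pmap X Y lam) := by
    constructor
    · intro i
      rw [key1 i]
      have h1 : (Pmap X Y nu).1 i ≤ (Pmap X Y mu).1 i := hdom.1 i
      nlinarith
    · intro r
      rw [key2 r]
      have h1 : (Pmap X Y mu).2 r ≤ (Pmap X Y nu).2 r := hdom.2 r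
      nlinarith
  have hne' : Pmap X Y lam' ≠ Pmap X Y lam := by
    rcases dom_ne_strict hdom hne with ⟨i0, hi0⟩ | ⟨r0, hr0⟩
    · intro he
      have := congrFun (congrArg Prod.fst he) i0
      rw [key1 i0] at this
      nlinarith
    · intro he
      have := congrFun (congrArg Prod.snd he) r0
      rw [key2 r0] at this
      nlinarith
  exact heff.2 ⟨Pmap X Y lam', Pmem X Y hY hl', hdom', hne'⟩

/-- Every Pareto-efficient point of the VRS set is a simplex point. -/
lemma eff_rep (X : Fin n → Fin m → ℝ) (Y : Fin n → Fin s → ℝ) (hY : ∀ j r, 0 ≤ Y j r)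
    {q : (Fin m → ℝ) × (Fin s → ℝ)} (heff : ParetoEff (VRS X Y) q) :
    ∃ lam ∈ stdSimplex ℝ (Fin n), Pmap X Y lam = q := by
  obtain ⟨lam, hlam, hdom⟩ := exists_simplex_dom X Y heff.1
  refine ⟨lam, hlam, ?_⟩
  by_contra hne
  exact heff.2 ⟨Pmap X Y lam, Pmem X Y hY hlam, hdom, hne⟩

lemma cont_P1 (X : Fin n → Fin m → ℝ) (i : Fin m) :
    Continuous fun lam : Fin n → ℝ => ∑ j, lam j * X j i :=
  continuous_finset_sum _ fun j _ => (continuous_apply j).mul continuous_const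

lemma cont_P2 (Y : Fin n → Fin s → ℝ) (r : Fin s) :
    Continuous fun lam : Fin n → ℝ => ∑ j, lam j * Y j r :=
  continuous_finset_sum _ fun j _ => (continuous_apply j).mul continuous_const

lemma cont_GP (X : Fin n → Fin m → ℝ) (Y : Fin n → Fin s → ℝ)
    (x0 : Fin m → ℝ) (y0 : Fin s → ℝ) :
    Continuous fun lam : Fin n → ℝ => G x0 y0 (Pmap X Y lam) := by
  unfold G Pmap
  apply Continuous.add
  · exact continuous_finset_sum _ fun i _ =>
      (continuous_const.sub (cont_P1 X i)).div_const _
  · exact continuous_finset_sum _ fun r _ =>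
      ((cont_P2 Y r).sub continuous_const).div_const _

end VRSAux

open VRSAux in
/-- Existence of closest targets: the weighted L¹-distance attains its minimum over the
(nonempty) set of Pareto-efficient points of T dominating the unit under evaluation. -/
theorem vrs_closest_targets_exist (m s n : ℕ)
    (X : Fin n → Fin m → ℝ) (Y : Fin n → Fin s → ℝ)
    (hX : ∀ j i, 0 ≤ X j i) (hXne : ∀ j, X j ≠ 0)
    (hY : ∀ j r, 0 ≤ Y j r) (hYne : ∀ j, Y j ≠ 0)
    (p₀ : (Fin m → ℝ) × (Fin s → ℝ)) (hp₀ : p₀ ∈ VRS X Y)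
    (hx₀ : ∀ i, 0 < p₀.1 i) (hy₀ : ∀ r, 0 < p₀.2 r) :
    ({q | ParetoEff (VRS X Y) q ∧ Dominates q p₀}).Nonempty ∧
    ∃ q ∈ {q | ParetoEff (VRS X Y) q ∧ Dominates q p₀},
      ∀ q' ∈ {q | ParetoEff (VRS X Y) q ∧ Dominates q p₀},
        (∑ i, (p₀.1 i - q.1 i) / p₀.1 i) + (∑ r, (q.2 r - p₀.2 r) / p₀.2 r) ≤
        (∑ i, (p₀.1 i - q'.1 i) / p₀.1 i) + (∑ r, (q'.2 r - p₀.2 r) / p₀.2 r) := by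
  classical
  -- Step 1: nonemptiness, by maximizing G over dominating simplex points
  obtain ⟨lam₀, hlam₀, hdom₀⟩ := exists_simplex_dom X Y hp₀
  set Λd : Set (Fin n → ℝ) :=
    {lam | lam ∈ stdSimplex ℝ (Fin n) ∧ Dominates (Pmap X Y lam) p₀} with hΛd
  have hdomclosed : IsClosed {lam : Fin n → ℝ | Dominates (Pmap X Y lam) p₀} := by
    have : {lam : Fin n → ℝ | Dominates (Pmap X Y lam) p₀} =
        (⋂ i, {lam : Fin n → ℝ | (∑ j, lam j * X j i) ≤ p₀.1 i}) ∩
        (⋂ r, {lam : Fin n → ℝ | p₀.2 r ≤ ∑ j, lam j * Y j r}) := by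
      ext lam
      simp only [Set.mem_setOf_eq, Set.mem_inter_iff, Set.mem_iInter, Dominates, Pmap]
    rw [this]
    exact IsClosed.inter
      (isClosed_iInter fun i => isClosed_le (cont_P1 X i) continuous_const)
      (isClosed_iInter fun r => isClosed_le continuous_const (cont_P2 Y r))
  have hΛd_comp : IsCompact Λd := by
    have : Λd = stdSimplex ℝ (Fin n) ∩ {lam | Dominates (Pmap X Y lam) p₀} := rfl
    rw [this]
    exact (isCompact_stdSimplex _ _).inter_right hdomclosed
  have hΛd_ne : Λd.Nonempty := ⟨lam₀, hlam₀, hdom₀⟩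
  have hcont : Continuous fun lam => G p₀.1 p₀.2 (Pmap X Y lam) := cont_GP X Y p₀.1 p₀.2
  obtain ⟨lamM, hlamM, hmax⟩ := hΛd_comp.exists_isMaxOn hΛd_ne hcont.continuousOn
  have heffM : ParetoEff (VRS X Y) (Pmap X Y lamM) := by
    refine ⟨Pmem X Y hY hlamM.1, ?_⟩
    rintro ⟨q, hqT, hqdom, hqne⟩
    obtain ⟨nu, hnu, hnudom⟩ := exists_simplex_dom X Y hqT
    have h1 : Dominates (Pmap X Y nu) (Pmap X Y lamM) := dom_trans hnudom hqdom
    have h2 : Pmap X Y nu ≠ Pmap X Y lamM := fun he =>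
      hqne (dom_antisymm hqdom (he ▸ hnudom))
    have h3 : G p₀.1 p₀.2 (Pmap X Y lamM) < G p₀.1 p₀.2 (Pmap X Y nu) :=
      G_strict p₀.1 p₀.2 hx₀ hy₀ h1 h2
    have h4 : nu ∈ Λd := ⟨hnu, dom_trans h1 hlamM.2⟩
    exact absurd (hmax h4) (not_le.2 h3)
  have hMmem : Pmap X Y lamM ∈ {q | ParetoEff (VRS X Y) q ∧ Dominates q p₀} :=
    ⟨heffM, hlamM.2⟩
  refine ⟨⟨Pmap X Y lamM, hMmem⟩, ?_⟩
  -- Step 2: the efficient dominating simplex weights form a compact set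
  set C : Finset (Fin n) → Set (Fin n → ℝ) := fun S =>
    {lam | lam ∈ stdSimplex ℝ (Fin n) ∧ (∀ j, j ∉ S → lam j = 0) ∧
      Dominates (Pmap X Y lam) p₀} with hC
  have hCcomp : ∀ S, IsCompact (C S) := by
    intro S
    have hCeq : C S = stdSimplex ℝ (Fin n) ∩
        ({lam : Fin n → ℝ | ∀ j, j ∉ S → lam j = 0} ∩
          {lam | Dominates (Pmap X Y lam) p₀}) := by
      ext lam
      simp only [hC, Set.mem_setOf_eq, Set.mem_inter_iff]
    rw [hCeq]
    refine (isCompact_stdSimplex _ _).inter_right (IsClosed.inter ?_ hdomclosed)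
    rw [Set.setOf_forall]
    refine isClosed_iInter fun j => ?_
    by_cases hj : j ∈ S
    · simp only [hj, not_true_eq_false, false_implies, Set.setOf_true]
      exact isClosed_univ
    · simp only [hj, not_false_eq_true, true_implies]
      exact isClosed_eq (continuous_apply j) continuous_const
  set Λe : Set (Fin n → ℝ) :=
    {lam | lam ∈ stdSimplex ℝ (Fin n) ∧ ParetoEff (VRS X Y) (Pmap X Y lam) ∧
      Dominates (Pmap X Y lam) p₀} with hΛe
  have hdecomp : Λe = ⋃ S ∈ {S : Finset (Fin n) |
      ∀ lam ∈ C S, ParetoEff (VRS X Y) (Pmap X Y lam)}, C S := by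
    ext lam
    constructor
    · rintro ⟨hls, heff, hdom⟩
      have hSgood : ∀ mu ∈ C (Finset.univ.filter fun j => 0 < lam j),
          ParetoEff (VRS X Y) (Pmap X Y mu) := by
        intro mu hmu
        refine support_eff X Y hY hls hmu.1 (fun j hj => ?_) heff
        have hjS : j ∈ Finset.univ.filter fun j => 0 < lam j := by
          by_contra hjS
          exact absurd (hmu.2.1 j hjS) (ne_of_gt hj)
        exact (Finset.mem_filter.1 hjS).2
      refine Set.mem_iUnion₂.2 ⟨_, hSgood, hls, fun j hj => ?_, hdom⟩
      have : ¬ (0 < lam j) := fun hpos =>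
        hj (Finset.mem_filter.2 ⟨Finset.mem_univ _, hpos⟩)
      exact le_antisymm (not_lt.1 this) (hls.1 j)
    · rintro hmem
      obtain ⟨S, hS, hlam⟩ := Set.mem_iUnion₂.1 hmem
      exact ⟨hlam.1, hS lam hlam, hlam.2.2⟩
  have hΛe_comp : IsCompact Λe := by
    rw [hdecomp]
    exact Set.Finite.isCompact_biUnion (Set.toFinite _) fun S _ => hCcomp S
  have hΛe_ne : Λe.Nonempty := ⟨lamM, hlamM.1, heffM, hlamM.2⟩
  obtain ⟨lamS, hlamS, hmin⟩ := hΛe_comp.exists_isMinOn hΛe_ne hcont.continuousOn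
  refine ⟨Pmap X Y lamS, ⟨hlamS.2.1, hlamS.2.2⟩, ?_⟩
  intro q' hq'
  obtain ⟨nu, hnu, hPnu⟩ := eff_rep X Y hY hq'.1
  have hnuΛ : nu ∈ Λe := ⟨hnu, by rw [hPnu]; exact hq'.1, by rw [hPnu]; exact hq'.2⟩
  have hle := hmin hnuΛ
  simp only [Set.mem_setOf_eq] at hle
  rw [hPnu] at hle
  exact hle
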